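/- arXiv:2007.03420 — 3 statements merged into one kernel-verified Lean document; each statement's English description precedes it below -/
import Mathlib

section
/- For every x ∈ ℝⁿ, the atan-sum penalty converges to (π/2)·‖x‖₀ as δ → 0⁺, i.e., lim_{δ→0⁺} ∑_{i=1}^n arctan(|x_i|/δ) = (π/2)·‖x‖₀. -/
open Finset Filter Real Topology

lemma tendsto_arctan_div_nhdsGT_zero {c : ℝ} (hc : 0 < c) :
    Tendsto (fun δ : ℝ => arctan (c / δ)) (𝓝[>] 0) (𝓝 (π / 2)) :=
  (tendsto_arctan_atTop.mono_right nhdsWithin_le_nhds).comp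
    (tendsto_inv_nhdsGT_zero.const_mul_atTop hc)

lemma tendsto_arctan_abs_div_nhdsGT_zero (c : ℝ) :
    Tendsto (fun δ : ℝ => arctan (|c| / δ)) (𝓝[>] 0) (𝓝 (if c ≠ 0 then π / 2 else 0)) := by
  by_cases hc : c = 0
  · simp [hc]
  · simpa [hc] using tendsto_arctan_div_nhdsGT_zero (abs_pos.mpr hc)

/-- As δ → 0⁺, the atan-sum penalty ∑ arctan(|xᵢ|/δ) converges to
(π/2)·‖x‖₀. -/
theorem stmt5 {n : ℕ} (x : Fin n → ℝ) :
    Filter.Tendsto (fun δ : ℝ => ∑ i, Real.arctan (|x i| / δ))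
      (nhdsWithin 0 (Set.Ioi 0))
      (nhds ((Real.pi / 2) * ((Finset.univ.filter (fun i => x i ≠ 0)).card : ℝ))) := by
  have hlimit : (π / 2) * ((univ.filter (fun i => x i ≠ 0)).card : ℝ)
      = ∑ i, if x i ≠ 0 then π / 2 else 0 := by
    rw [card_filter, Nat.cast_sum, mul_sum]
    simp only [Nat.cast_ite, Nat.cast_one, Nat.cast_zero, mul_ite, mul_one, mul_zero]
  rw [hlimit]
  exact tendsto_finsetSum _ fun i _ => tendsto_arctan_abs_div_nhdsGT_zero (x i)
end

section
/- Let δ > 0 and ρ⁰ ∈ ℝⁿ with all entries nonzero, and let B ∈ ℝ^{n×n} be the diagonal matrix with diagonal entries B_pp := (1/2)·δ/(|ρ⁰_p|·(δ² + (ρ⁰_p)²)). Then for every ρ ∈ ℝⁿ, ∑_{p=1}^n arctan(|ρ_p|/δ) − ∑_{p=1}^n arctan(|ρ⁰_p|/δ) ≤ ρᵀBρ − (ρ⁰)ᵀBρ⁰. -/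
open Finset Matrix Set

/-!
On `[0, ∞)` the arctangent is concave, so each summand `arctan (|ρ_p| / δ)` lies below its tangent
line at `|ρ⁰_p| / δ`; the linear term `t - s` of that tangent is in turn bounded by the
quadratic `(t² - s²) / (2s)` (AM-GM), and collecting coefficients gives the diagonal entries of `B`.
-/

lemma ConcaveOn.le_add_mul_sub_of_hasDerivAt {S : Set ℝ} {f : ℝ → ℝ} {x y f' : ℝ}
    (hf : ConcaveOn ℝ S f) (hx : x ∈ S) (hy : y ∈ S) (hf' : HasDerivAt f f' x) :
    f y ≤ f x + f' * (y - x) := by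
  rcases lt_trichotomy x y with hxy | rfl | hyx
  · have := hf.slope_le_of_hasDerivAt hx hy hxy hf'
    rw [slope_def_field, div_le_iff₀ (sub_pos.2 hxy)] at this
    linarith
  · simp
  · have := hf.le_slope_of_hasDerivAt hy hx hyx hf'
    rw [slope_def_field, le_div_iff₀ (sub_pos.2 hyx)] at this
    linarith

lemma Real.concaveOn_arctan_Ici : ConcaveOn ℝ (Ici 0) Real.arctan := by
  refine AntitoneOn.concaveOn_of_deriv (convex_Ici 0) Real.continuous_arctan.continuousOn
    Real.differentiable_arctan.differentiableOn ?_
  rw [interior_Ici, Real.deriv_arctan]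
  intro x (hx : 0 < x) y _ hxy
  dsimp only
  gcongr

lemma Real.arctan_sub_arctan_le {a b : ℝ} (ha : 0 ≤ a) (hb : 0 ≤ b) :
    Real.arctan a - Real.arctan b ≤ (a - b) / (1 + b ^ 2) := by
  have := Real.concaveOn_arctan_Ici.le_add_mul_sub_of_hasDerivAt hb ha (Real.hasDerivAt_arctan b)
  rw [one_div_mul_eq_div] at this
  linarith

lemma sub_le_sq_sub_sq_div {a b : ℝ} (hb : 0 < b) : a - b ≤ (a ^ 2 - b ^ 2) / (2 * b) := by
  rw [le_div_iff₀ (by positivity)]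
  nlinarith [sq_nonneg (a - b)]

lemma arctan_abs_div_sub_le {δ : ℝ} (hδ : 0 < δ) (t : ℝ) {s : ℝ} (hs : s ≠ 0) :
    Real.arctan (|t| / δ) - Real.arctan (|s| / δ) ≤
      (1 / 2) * δ / (|s| * (δ ^ 2 + s ^ 2)) * (t ^ 2 - s ^ 2) := by
  have hs' : 0 < |s| := abs_pos.2 hs
  calc Real.arctan (|t| / δ) - Real.arctan (|s| / δ)
      ≤ (|t| / δ - |s| / δ) / (1 + (|s| / δ) ^ 2) :=
        Real.arctan_sub_arctan_le (by positivity) (by positivity)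
    _ ≤ ((|t| / δ) ^ 2 - (|s| / δ) ^ 2) / (2 * (|s| / δ)) / (1 + (|s| / δ) ^ 2) := by
        gcongr
        exact sub_le_sq_sub_sq_div (by positivity)
    _ = (1 / 2) * δ / (|s| * (δ ^ 2 + s ^ 2)) * (t ^ 2 - s ^ 2) := by
        rw [div_pow, div_pow, sq_abs, sq_abs]
        field_simp

/-- With B the diagonal matrix with entries
B_pp = (1/2)·δ/(|ρ⁰_p|(δ² + (ρ⁰_p)²)) (all entries of ρ⁰ nonzero), for every ρ,
‖ρ‖_{g_δ} − ‖ρ⁰‖_{g_δ} ≤ ρᵀBρ − (ρ⁰)ᵀBρ⁰. -/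
theorem stmt14 {n : ℕ} (δ : ℝ) (hδ : 0 < δ) (ρ₀ : Fin n → ℝ)
    (hρ₀ : ∀ p, ρ₀ p ≠ 0)
    (B : Matrix (Fin n) (Fin n) ℝ)
    (hB : B = Matrix.diagonal (fun p => (1 / 2) * δ / (|ρ₀ p| * (δ ^ 2 + ρ₀ p ^ 2)))) :
    ∀ ρ : Fin n → ℝ,
      (∑ p, Real.arctan (|ρ p| / δ)) - (∑ p, Real.arctan (|ρ₀ p| / δ)) ≤
        ρ ⬝ᵥ B.mulVec ρ - ρ₀ ⬝ᵥ B.mulVec ρ₀ := by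
  intro ρ
  subst hB
  simp only [dotProduct, mulVec_diagonal, ← Finset.sum_sub_distrib]
  refine Finset.sum_le_sum fun p _ => ?_
  exact (arctan_abs_div_sub_le hδ (ρ p) (hρ₀ p)).trans_eq (by ring)
end

section
/- Let Ψ ∈ ℝ^{m×n}, r̂ ∈ ℝ^m, λ > 0, δ > 0, and let ρ⁰ ∈ ℝⁿ have all entries nonzero. Let B ∈ ℝ^{n×n} be the diagonal matrix with diagonal entries B_pp := (1/2)·δ/(|ρ⁰_p|·(δ² + (ρ⁰_p)²)). Then ΨᵀΨ + λB is positive definite (hence invertible), and the update ρ¹ := (ΨᵀΨ + λB)⁻¹Ψᵀr̂ satisfies λ·‖ρ¹‖_{g_δ} + ‖r̂ − Ψρ¹‖₂² ≤ λ·‖ρ⁰‖_{g_δ} + ‖r̂ − Ψρ⁰‖₂², with equality only if |ρ¹| = |ρ⁰| entrywise. -/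
/-!
The update is a majorize–minimize step. In the variable `t = x²` the map `t ↦ arctan (√t / δ)`
is concave, so it lies below its tangent at `t = x₀²`, whose slope is exactly the weight `B_pp`.
Hence `λ‖ρ‖_{g_δ} + ‖r̂ − Ψρ‖²` is majorized, with equality at `ρ⁰`, by the quadratic
`λ ρᵀBρ + ‖r̂ − Ψρ‖²` plus a constant, and `ρ¹` is the minimizer of that quadratic. Completing the
square, the objective drops by at least `(ρ⁰ − ρ¹)ᵀ(ΨᵀΨ + λB)(ρ⁰ − ρ¹)`, which is positive unless
`ρ¹ = ρ⁰`.
-/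

open Finset Matrix Real

lemma Real.arctan_le_arctan_add_of_nonneg {u v : ℝ} (hu : 0 ≤ u) (hv : 0 ≤ v) :
    arctan u ≤ arctan v + (u - v) / (1 + v ^ 2) := by
  have slope (a b : ℝ) (hab : a < b) :
      ∃ c ∈ Set.Ioo a b, arctan b - arctan a = (b - a) / (1 + c ^ 2) := by
    obtain ⟨c, hc, hslope⟩ := exists_hasDerivAt_eq_slope arctan (fun x => 1 / (1 + x ^ 2)) hab
      continuous_arctan.continuousOn fun x _ => hasDerivAt_arctan x
    refine ⟨c, hc, ?_⟩
    rw [eq_div_iff (sub_pos.2 hab).ne'] at hslope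
    rw [← hslope]
    ring
  rcases lt_trichotomy u v with huv | rfl | hvu
  · obtain ⟨c, ⟨huc, hcv⟩, hc⟩ := slope u v huv
    have : (v - u) / (1 + v ^ 2) ≤ (v - u) / (1 + c ^ 2) := by
      gcongr
      nlinarith
    rw [← neg_sub v u, neg_div]
    linarith
  · simp
  · obtain ⟨c, ⟨hvc, hcu⟩, hc⟩ := slope v u hvu
    have : (u - v) / (1 + c ^ 2) ≤ (u - v) / (1 + v ^ 2) := by
      gcongr
    linarith

/-- The diagonal entry `B_pp` of the paper, with `x₀ = ρ⁰_p`. -/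
noncomputable def atanWeight (δ x₀ : ℝ) : ℝ :=
  1 / 2 * δ / (|x₀| * (δ ^ 2 + x₀ ^ 2))

lemma atanWeight_pos {δ x₀ : ℝ} (hδ : 0 < δ) (hx₀ : x₀ ≠ 0) : 0 < atanWeight δ x₀ := by
  have := abs_pos.2 hx₀
  unfold atanWeight
  positivity

lemma arctan_abs_div_le {δ x₀ : ℝ} (hδ : 0 < δ) (hx₀ : x₀ ≠ 0) (x : ℝ) :
    arctan (|x| / δ) ≤ arctan (|x₀| / δ) + atanWeight δ x₀ * (x ^ 2 - x₀ ^ 2) := by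
  have hb : 0 < |x₀| := abs_pos.2 hx₀
  have tangent := arctan_le_arctan_add_of_nonneg (u := |x| / δ) (v := |x₀| / δ)
    (by positivity) (by positivity)
  rw [atanWeight, ← sq_abs x, ← sq_abs x₀]
  have gap : 1 / 2 * δ / (|x₀| * (δ ^ 2 + |x₀| ^ 2)) * (|x| ^ 2 - |x₀| ^ 2)
      - (|x| / δ - |x₀| / δ) / (1 + (|x₀| / δ) ^ 2)
      = δ * (|x| - |x₀|) ^ 2 / (2 * |x₀| * (δ ^ 2 + |x₀| ^ 2)) := by
    field_simp
    ring
  have : 0 ≤ δ * (|x| - |x₀|) ^ 2 / (2 * |x₀| * (δ ^ 2 + |x₀| ^ 2)) := by positivity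
  linarith

section Quadratic

variable {ι κ R : Type*} [Fintype ι] [Fintype κ] [CommRing R]

lemma dotProduct_sub_mulVec_self (Ψ : Matrix κ ι R) (r : κ → R) (x : ι → R) :
    (r - Ψ *ᵥ x) ⬝ᵥ (r - Ψ *ᵥ x) = x ⬝ᵥ (Ψᵀ * Ψ) *ᵥ x - 2 * ((Ψᵀ *ᵥ r) ⬝ᵥ x) + r ⬝ᵥ r := by
  have hcross : r ⬝ᵥ Ψ *ᵥ x = (Ψᵀ *ᵥ r) ⬝ᵥ x := by
    rw [dotProduct_mulVec, ← mulVec_transpose]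
  have hsq : Ψ *ᵥ x ⬝ᵥ Ψ *ᵥ x = x ⬝ᵥ (Ψᵀ * Ψ) *ᵥ x := by
    rw [← mulVec_mulVec, dotProduct_mulVec, ← mulVec_transpose, dotProduct_comm]
  rw [sub_dotProduct, dotProduct_sub, dotProduct_sub, dotProduct_comm (Ψ *ᵥ x) r, hcross, hsq]
  ring

lemma dotProduct_mulVec_sub_eq_of_mulVec_eq {A : Matrix ι ι R} (hA : A.IsSymm) {x₁ b : ι → R}
    (hx₁ : A *ᵥ x₁ = b) (x : ι → R) :
    x ⬝ᵥ A *ᵥ x - 2 * (b ⬝ᵥ x) =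
      x₁ ⬝ᵥ A *ᵥ x₁ - 2 * (b ⬝ᵥ x₁) + (x - x₁) ⬝ᵥ A *ᵥ (x - x₁) := by
  have hsymm : x₁ ⬝ᵥ A *ᵥ x = b ⬝ᵥ x := by
    rw [dotProduct_mulVec, ← mulVec_transpose, hA.eq, hx₁]
  rw [mulVec_sub, sub_dotProduct, dotProduct_sub, dotProduct_sub, hsymm, hx₁,
    dotProduct_comm x b, dotProduct_comm x₁ b]
  ring

end Quadratic

section Majorization

variable {ι κ : Type*} [Fintype ι] [Fintype κ] [DecidableEq ι]

/-- The atan-sum penalty `‖x‖_{g_δ}`. -/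
noncomputable def atanPenalty (δ : ℝ) (x : ι → ℝ) : ℝ :=
  ∑ p, arctan (|x p| / δ)

noncomputable def atanWeightMatrix (δ : ℝ) (x₀ : ι → ℝ) : Matrix ι ι ℝ :=
  diagonal fun p => atanWeight δ (x₀ p)

lemma atanPenalty_le {δ : ℝ} (hδ : 0 < δ) {x₀ : ι → ℝ} (hx₀ : ∀ p, x₀ p ≠ 0) (x : ι → ℝ) :
    atanPenalty δ x ≤ atanPenalty δ x₀ +
      (x ⬝ᵥ atanWeightMatrix δ x₀ *ᵥ x - x₀ ⬝ᵥ atanWeightMatrix δ x₀ *ᵥ x₀) := by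
  have hquad (y : ι → ℝ) : y ⬝ᵥ atanWeightMatrix δ x₀ *ᵥ y = ∑ p, atanWeight δ (x₀ p) * y p ^ 2 :=
    Finset.sum_congr rfl fun p _ => by simp only [atanWeightMatrix, mulVec_diagonal]; ring
  rw [atanPenalty, atanPenalty, hquad, hquad, ← Finset.sum_sub_distrib, ← Finset.sum_add_distrib]
  exact Finset.sum_le_sum fun p _ => by
    rw [← mul_sub]
    exact arctan_abs_div_le hδ (hx₀ p) (x p)

noncomputable def atanObjective (Ψ : Matrix κ ι ℝ) (r : κ → ℝ) (lam δ : ℝ) (x : ι → ℝ) : ℝ :=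
  lam * atanPenalty δ x + ∑ i, (r i - (Ψ *ᵥ x) i) ^ 2

lemma atanObjective_add_le_of_mulVec_eq {lam δ : ℝ} (hlam : 0 ≤ lam) (hδ : 0 < δ)
    (Ψ : Matrix κ ι ℝ) (r : κ → ℝ) {x₀ x₁ : ι → ℝ} (hx₀ : ∀ p, x₀ p ≠ 0)
    (hx₁ : (Ψᵀ * Ψ + lam • atanWeightMatrix δ x₀) *ᵥ x₁ = Ψᵀ *ᵥ r) :
    atanObjective Ψ r lam δ x₁ +
        (x₀ - x₁) ⬝ᵥ (Ψᵀ * Ψ + lam • atanWeightMatrix δ x₀) *ᵥ (x₀ - x₁) ≤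
      atanObjective Ψ r lam δ x₀ := by
  set W := atanWeightMatrix δ x₀
  have hres (x : ι → ℝ) : ∑ i, (r i - (Ψ *ᵥ x) i) ^ 2 =
      x ⬝ᵥ (Ψᵀ * Ψ) *ᵥ x - 2 * ((Ψᵀ *ᵥ r) ⬝ᵥ x) + r ⬝ᵥ r := by
    rw [← dotProduct_sub_mulVec_self]
    simp only [dotProduct, Pi.sub_apply, sq]
  have hsplit (x : ι → ℝ) :
      x ⬝ᵥ (Ψᵀ * Ψ + lam • W) *ᵥ x = x ⬝ᵥ (Ψᵀ * Ψ) *ᵥ x + lam * (x ⬝ᵥ W *ᵥ x) := by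
    rw [add_mulVec, dotProduct_add, smul_mulVec, dotProduct_smul, smul_eq_mul]
  have hsymm : (Ψᵀ * Ψ + lam • W).IsSymm :=
    IsSymm.add (by simp [IsSymm, transpose_mul]) ((isSymm_diagonal _).smul lam)
  have hcomplete := dotProduct_mulVec_sub_eq_of_mulVec_eq hsymm hx₁ x₀
  have hpen := mul_le_mul_of_nonneg_left (atanPenalty_le hδ hx₀ x₁) hlam
  rw [hsplit, hsplit] at hcomplete
  rw [atanObjective, atanObjective, hres, hres]
  linarith

end Majorization

/-- With B the diagonal matrix with entries
B_pp = (1/2)·δ/(|ρ⁰_p|(δ² + (ρ⁰_p)²)) (all entries of ρ⁰ nonzero), the matrix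
ΨᵀΨ + λB is positive definite (hence invertible), and the reweighted update
ρ¹ = (ΨᵀΨ + λB)⁻¹Ψᵀrhat does not increase the objective
λ‖·‖_{g_δ} + ‖rhat − Ψ·‖₂², with equality only if |ρ¹| = |ρ⁰| entrywise. -/
theorem stmt15 {m n : ℕ} (Ψ : Matrix (Fin m) (Fin n) ℝ) (rhat : Fin m → ℝ)
    (lam δ : ℝ) (hlam : 0 < lam) (hδ : 0 < δ)
    (ρ₀ : Fin n → ℝ) (hρ₀ : ∀ p, ρ₀ p ≠ 0)
    (B : Matrix (Fin n) (Fin n) ℝ)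
    (hB : B = Matrix.diagonal (fun p => (1 / 2) * δ / (|ρ₀ p| * (δ ^ 2 + ρ₀ p ^ 2)))) :
    (Ψ.transpose * Ψ + lam • B).PosDef ∧
    IsUnit (Ψ.transpose * Ψ + lam • B) ∧
    ∀ ρ₁ : Fin n → ℝ,
      ρ₁ = (Ψ.transpose * Ψ + lam • B)⁻¹.mulVec (Ψ.transpose.mulVec rhat) →
      (lam * ∑ p, Real.arctan (|ρ₁ p| / δ) + ∑ i, (rhat i - Ψ.mulVec ρ₁ i) ^ 2 ≤
          lam * ∑ p, Real.arctan (|ρ₀ p| / δ) + ∑ i, (rhat i - Ψ.mulVec ρ₀ i) ^ 2) ∧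
        (lam * ∑ p, Real.arctan (|ρ₁ p| / δ) + ∑ i, (rhat i - Ψ.mulVec ρ₁ i) ^ 2 =
            lam * ∑ p, Real.arctan (|ρ₀ p| / δ) + ∑ i, (rhat i - Ψ.mulVec ρ₀ i) ^ 2 →
          ∀ p, |ρ₁ p| = |ρ₀ p|) := by
  obtain rfl : B = atanWeightMatrix δ ρ₀ := hB
  have hA : (Ψᵀ * Ψ + lam • atanWeightMatrix δ ρ₀).PosDef := by
    refine PosDef.posSemidef_add (posSemidef_conjTranspose_mul_self Ψ) ?_
    rw [atanWeightMatrix, ← diagonal_smul, posDef_diagonal_iff]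
    exact fun p => mul_pos hlam (atanWeight_pos hδ (hρ₀ p))
  refine ⟨hA, hA.isUnit, fun ρ₁ hρ₁ => ?_⟩
  have hnormal : (Ψᵀ * Ψ + lam • atanWeightMatrix δ ρ₀) *ᵥ ρ₁ = Ψᵀ *ᵥ rhat := by
    rw [hρ₁, mulVec_mulVec, mul_nonsing_inv _ ((isUnit_iff_isUnit_det _).1 hA.isUnit),
      one_mulVec]
  have hdescent := atanObjective_add_le_of_mulVec_eq hlam.le hδ Ψ rhat hρ₀ hnormal
  have hgap := hA.posSemidef.dotProduct_mulVec_nonneg (ρ₀ - ρ₁)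
  rw [star_trivial] at hgap
  change atanObjective Ψ rhat lam δ ρ₁ ≤ atanObjective Ψ rhat lam δ ρ₀ ∧
    (atanObjective Ψ rhat lam δ ρ₁ = atanObjective Ψ rhat lam δ ρ₀ → _)
  refine ⟨by linarith, fun heq p => ?_⟩
  obtain rfl : ρ₁ = ρ₀ := by
    by_contra hne
    have hpos := hA.dotProduct_mulVec_pos (sub_ne_zero.2 (Ne.symm hne))
    rw [star_trivial] at hpos
    linarith
  rfl
end
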